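/- Let S = ε_1 X_1 + ... + ε_n X_n where X_1, ..., X_n are independent Bernoulli random variables with P(X_j = 1) = p_j and ε_j ∈ {+1, -1} are fixed signs, and let σ = sqrt(Σ_{j=1}^n p_j(1 - p_j)) denote the standard deviation of S. Then for all integers i, σ · P(S = i) ≤ M, where M = sup_{u ≥ 0} sqrt(2u)·e^{-2u}·Σ_{k=0}^∞ (u^k/k!)^2. -/

import Mathlib

open MeasureTheory ProbabilityTheory

/-- `M(u) = √(2u) e^{-2u} Σ_k (u^k/k!)²`. -/
noncomputable def Mfun (u : ℝ) : ℝ :=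
  Real.sqrt (2 * u) * Real.exp (-2 * u) * ∑' k : ℕ, (u ^ k / (Nat.factorial k : ℝ)) ^ 2

/-- `M = sup_{u ≥ 0} M(u)`. -/
noncomputable def Mconst : ℝ := sSup {r : ℝ | ∃ u : ℝ, 0 ≤ u ∧ r = Mfun u}

/-!
Since `S` is integer valued, Fourier inversion on `[-π, π]` gives
`2π P(S = i) ≤ ∫_{-π}^{π} |φ_S(t)| dt`, and by independence
`|φ_S(t)| = ∏_j |1 - p_j + p_j e^{i ε_j t}| ≤ exp (-σ² (1 - cos t))`.
Expanding `e^{v cos t}` in powers of `cos t` and integrating them (Wallis) yields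
`√(2u) / (2π) ∫_{-π}^{π} e^{-2u (1 - cos t)} dt = M(u)`, so `σ P(S = i) ≤ M(σ²/2) ≤ M`;
comparing with a Gaussian shows that `M(u)` is bounded, so that the supremum `M` is a genuine one.
-/

open Real
open scoped Nat Complex
open Complex (I)

lemma integral_cos_pow_add_two_neg_pi_pi (n : ℕ) :
    ∫ t in -π..π, cos t ^ (n + 2) = (n + 1) / (n + 2) * ∫ t in -π..π, cos t ^ n := by
  simp [integral_cos_pow]

lemma integral_cos_pow_odd_neg_pi_pi (k : ℕ) : ∫ t in -π..π, cos t ^ (2 * k + 1) = 0 := by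
  induction k with
  | zero => simp
  | succ k ih => rw [show 2 * (k + 1) + 1 = 2 * k + 1 + 2 by ring,
      integral_cos_pow_add_two_neg_pi_pi, ih, mul_zero]

lemma integral_cos_pow_even_neg_pi_pi (k : ℕ) :
    ∫ t in -π..π, cos t ^ (2 * k) = 2 * π * (2 * k)! / (4 ^ k * (k ! : ℝ) ^ 2) := by
  induction k with
  | zero => simp [two_mul]
  | succ k ih =>
    rw [show 2 * (k + 1) = 2 * k + 2 by ring, integral_cos_pow_add_two_neg_pi_pi, ih]
    push_cast [Nat.factorial_succ, pow_succ]
    field_simp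
    ring

lemma hasSum_integral_exp_mul_cos (v : ℝ) :
    HasSum (fun n : ℕ => v ^ n / n ! * ∫ t in -π..π, cos t ^ n)
      (∫ t in -π..π, exp (v * cos t)) := by
  have hterm (n : ℕ) : v ^ n / n ! * ∫ t in -π..π, cos t ^ n
      = ∫ t in -π..π, (v * cos t) ^ n / n ! := by
    rw [← intervalIntegral.integral_const_mul]
    congr 1 with t
    ring
  simp_rw [hterm]
  refine intervalIntegral.hasSum_integral_of_dominated_convergence
    (fun n _ => |v| ^ n / n !) (fun n => by fun_prop) (fun n => ?_) ?_ ?_ ?_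
  · refine ae_of_all _ fun t _ => ?_
    rw [norm_div, norm_pow, norm_mul, Real.norm_natCast]
    gcongr
    exact mul_le_of_le_one_right (norm_nonneg v) (abs_cos_le_one t)
  · exact ae_of_all _ fun t _ => Real.summable_pow_div_factorial |v|
  · exact intervalIntegrable_const
  · refine ae_of_all _ fun t _ => ?_
    rw [exp_eq_exp_ℝ]
    exact NormedSpace.expSeries_div_hasSum_exp (v * cos t)

lemma integral_exp_mul_cos (v : ℝ) :
    ∫ t in -π..π, exp (v * cos t) = 2 * π * ∑' k : ℕ, ((v / 2) ^ k / k !) ^ 2 := by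
  rw [← tsum_mul_left]
  refine ((Function.Injective.hasSum_iff (mul_right_injective₀ two_ne_zero) ?_).2
    (hasSum_integral_exp_mul_cos v)).tsum_eq.symm.trans (tsum_congr fun k => ?_)
  · intro n hn
    obtain ⟨k, rfl⟩ : Odd n := Nat.not_even_iff_odd.1 fun ⟨k, hk⟩ => hn ⟨k, by simp only; omega⟩
    simp [integral_cos_pow_odd_neg_pi_pi]
  · simp only [Function.comp_apply, integral_cos_pow_even_neg_pi_pi]
    have : ((2 * k)! : ℝ) ≠ 0 := by positivity
    rw [div_pow v, pow_mul', show (4 : ℝ) ^ k = (2 ^ k) ^ 2 by rw [← pow_mul', pow_mul]; norm_num]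
    field_simp

lemma Mfun_eq_integral (u : ℝ) :
    Mfun u = √(2 * u) / (2 * π) * ∫ t in -π..π, exp (-(2 * u) * (1 - cos t)) := by
  have hexp (t : ℝ) : exp (-(2 * u) * (1 - cos t)) = exp (-2 * u) * exp (2 * u * cos t) := by
    rw [← exp_add]; ring_nf
  simp_rw [hexp, intervalIntegral.integral_const_mul, integral_exp_mul_cos,
    mul_div_cancel_left₀ u two_ne_zero, Mfun]
  field_simp

lemma sqrt_mul_integral_exp_neg_mul_one_sub_cos_le {v : ℝ} (hv : 0 ≤ v) :
    √v * ∫ t in -π..π, exp (-v * (1 - cos t)) ≤ √(π ^ 3 / 2) := by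
  rcases hv.eq_or_lt with rfl | hv_pos
  · simp only [sqrt_zero, zero_mul]
    positivity
  set b := 2 * v / π ^ 2
  have hb : 0 < b := by positivity
  -- Jordan's inequality `1 - cos t ≥ 2 t² / π²` on `[-π, π]` dominates the integrand by a Gaussian.
  have hgauss : ∫ t in -π..π, exp (-v * (1 - cos t)) ≤ ∫ t in -π..π, exp (-b * t ^ 2) := by
    refine intervalIntegral.integral_mono_on (by linarith [pi_pos])
      (by apply Continuous.intervalIntegrable; fun_prop)
      (by apply Continuous.intervalIntegrable; fun_prop) fun t ht => exp_le_exp.2 ?_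
    have := cos_le_one_sub_mul_cos_sq (abs_le.2 ⟨ht.1, ht.2⟩)
    have : b * t ^ 2 = v * (2 / π ^ 2 * t ^ 2) := by ring
    nlinarith
  have htail : ∫ t in -π..π, exp (-b * t ^ 2) ≤ √(π / b) := by
    rw [← integral_gaussian, intervalIntegral.integral_of_le (by linarith [pi_pos])]
    exact setIntegral_le_integral (integrable_exp_neg_mul_sq hb)
      (ae_of_all _ fun t => (exp_pos _).le)
  calc √v * ∫ t in -π..π, exp (-v * (1 - cos t)) ≤ √v * √(π / b) := by gcongr; linarith
    _ = √(π ^ 3 / 2) := by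
      rw [← sqrt_mul hv]
      congr 1
      simp only [b]
      field_simp

lemma Mfun_le {u : ℝ} (hu : 0 ≤ u) : Mfun u ≤ √(π ^ 3 / 2) / (2 * π) := by
  rw [Mfun_eq_integral, div_mul_eq_mul_div]
  gcongr
  exact sqrt_mul_integral_exp_neg_mul_one_sub_cos_le (by positivity)

lemma Mfun_le_Mconst {u : ℝ} (hu : 0 ≤ u) : Mfun u ≤ Mconst :=
  le_csSup ⟨_, fun _ ⟨_, hw, hr⟩ => hr ▸ Mfun_le hw⟩ ⟨u, hu, rfl⟩

lemma integral_exp_mul_intCast_mul_I (m : ℤ) :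
    ∫ t in -π..π, cexp (t * m * I) = if m = 0 then 2 * π else 0 := by
  split_ifs with hm
  · simp [hm, two_mul]
  have hc : (m : ℂ) * I ≠ 0 := mul_ne_zero (Int.cast_ne_zero.2 hm) Complex.I_ne_zero
  have hper : cexp (m * I * π) = cexp (m * I * -π) := by
    rw [← mul_one (cexp (m * I * -π)), ← Complex.exp_int_mul_two_pi_mul_I m, ← Complex.exp_add]
    ring_nf
  simp_rw [mul_assoc, mul_comm _ ((m : ℂ) * I)]
  rw [integral_exp_mul_complex hc]
  push_cast
  rw [hper, sub_self, zero_div]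

lemma integral_exp_mul_I_mul_charFun_eq {ν : Measure ℝ} [IsFiniteMeasure ν]
    (hν : ∀ᵐ x ∂ν, x ∈ Set.range (Int.cast : ℤ → ℝ)) (i : ℤ) :
    ∫ t in -π..π, cexp (-(t * i) * I) * charFun ν t = 2 * π * ν.real {(i : ℝ)} := by
  have hint : Integrable (Function.uncurry fun (t x : ℝ) => cexp (t * (x - i) * I))
      ((volume.restrict (Set.uIoc (-π) π)).prod ν) := by
    have : IsFiniteMeasure (volume.restrict (Set.uIoc (-π) π)) := isFiniteMeasure_restrict_Ioc _ _
    refine Integrable.of_bound (by fun_prop) 1 (ae_of_all _ fun q => ?_)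
    simp only [Function.uncurry, ← Complex.ofReal_intCast, ← Complex.ofReal_sub,
      ← Complex.ofReal_mul, Complex.norm_exp_ofReal_mul_I, le_refl]
  have hinner : (fun x : ℝ => ∫ t in -π..π, cexp (t * (x - i) * I))
      =ᵐ[ν] Set.indicator {(i : ℝ)} fun _ => (2 * π : ℂ) := by
    filter_upwards [hν] with x ⟨k, hk⟩
    subst hk
    have := integral_exp_mul_intCast_mul_I (k - i)
    push_cast at this ⊢
    rw [this]
    by_cases hki : k = i <;> simp [hki, sub_eq_zero]
  calc ∫ t in -π..π, cexp (-(t * i) * I) * charFun ν t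
      = ∫ t in -π..π, ∫ x, cexp (t * (x - i) * I) ∂ν := by
        congr 1 with t
        rw [charFun_apply_real, ← integral_const_mul]
        congr 1 with x
        rw [← Complex.exp_add]
        ring_nf
    _ = ∫ x : ℝ, (∫ t in -π..π, cexp (t * (x - i) * I)) ∂ν := intervalIntegral_integral_swap hint
    _ = 2 * π * ν.real {(i : ℝ)} := by
        rw [integral_congr_ae hinner, integral_indicator_const _ (measurableSet_singleton _),
          Complex.real_smul, mul_comm]

lemma two_pi_mul_measureReal_singleton_le {ν : Measure ℝ} [IsFiniteMeasure ν]
    (hν : ∀ᵐ x ∂ν, x ∈ Set.range (Int.cast : ℤ → ℝ)) (i : ℤ) :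
    2 * π * ν.real {(i : ℝ)} ≤ ∫ t in -π..π, ‖charFun ν t‖ :=
  calc 2 * π * ν.real {(i : ℝ)} = ‖∫ t in -π..π, cexp (-(t * i) * I) * charFun ν t‖ := by
        rw [integral_exp_mul_I_mul_charFun_eq hν i]
        norm_cast
        rw [Real.norm_of_nonneg (by positivity)]
    _ ≤ ∫ t in -π..π, ‖cexp (-(t * i) * I) * charFun ν t‖ :=
        intervalIntegral.norm_integral_le_integral_norm (by linarith [pi_pos])
    _ = ∫ t in -π..π, ‖charFun ν t‖ := by
        simp_rw [norm_mul, ← Complex.ofReal_intCast, ← Complex.ofReal_mul, ← Complex.ofReal_neg,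
          Complex.norm_exp_ofReal_mul_I, one_mul]

lemma charFun_map_eq_of_bernoulli {Ω : Type*} [MeasurableSpace Ω] {μ : Measure Ω}
    [IsProbabilityMeasure μ] {Y : Ω → ℝ} (hY : Measurable Y) (hval : ∀ ω, Y ω = 0 ∨ Y ω = 1)
    {p : ℝ} (hp : 0 ≤ p) (hdist : μ {ω | Y ω = 1} = ENNReal.ofReal p) (s : ℝ) :
    charFun (μ.map Y) s = 1 - p + p * cexp (s * I) := by
  have hmeas : MeasurableSet {ω | Y ω = 1} := hY (measurableSet_singleton 1)
  have hind : Y = {ω | Y ω = 1}.indicator 1 := by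
    ext ω
    rcases hval ω with h | h <;> simp [h]
  have hint : Integrable Y μ := hind ▸ (integrable_const 1).indicator hmeas
  have hmean : ∫ ω, Y ω ∂μ = p := by
    rw [hind, integral_indicator_one hmeas, measureReal_def, hdist, ENNReal.toReal_ofReal hp]
  -- `Y ∈ {0, 1}` makes `e^{isY}` affine in `Y`.
  have haffine (ω : Ω) : cexp (s * Y ω * I) = 1 + Y ω * (cexp (s * I) - 1) := by
    rcases hval ω with h | h <;> simp [h]
  rw [charFun_apply_real, integral_map hY.aemeasurable (by fun_prop)]
  simp_rw [haffine]
  rw [integral_add (integrable_const _) (hint.ofReal.mul_const _), integral_mul_const,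
    integral_complex_ofReal, hmean, integral_const, probReal_univ, one_smul]
  ring

lemma norm_one_sub_add_mul_exp_mul_I_le (p s : ℝ) :
    ‖1 - p + p * cexp (s * I)‖ ≤ exp (-(p * (1 - p)) * (1 - cos s)) := by
  have hsq : ‖1 - p + p * cexp (s * I)‖ ^ 2 = 1 - 2 * (p * (1 - p) * (1 - cos s)) := by
    rw [Complex.sq_norm, Complex.normSq_apply]
    simp only [Complex.add_re, Complex.sub_re, Complex.one_re, Complex.ofReal_re, Complex.mul_re,
      Complex.exp_ofReal_mul_I_re, Complex.exp_ofReal_mul_I_im, Complex.ofReal_im, Complex.add_im,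
      Complex.sub_im, Complex.one_im, Complex.mul_im]
    linear_combination p ^ 2 * sin_sq_add_cos_sq s
  rw [← pow_le_pow_iff_left₀ (norm_nonneg _) (exp_pos _).le two_ne_zero, hsq, ← exp_nat_mul,
    Nat.cast_ofNat]
  linarith [add_one_le_exp (2 * (-(p * (1 - p)) * (1 - cos s)))]

lemma norm_charFun_map_sum_le {ι Ω : Type*} [Fintype ι] [MeasurableSpace Ω] {μ : Measure Ω}
    [IsProbabilityMeasure μ] {p ε : ι → ℝ} {X : ι → Ω → ℝ} (hp : ∀ j, 0 ≤ p j)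
    (hε : ∀ j, ε j = 1 ∨ ε j = -1) (hX : ∀ j, Measurable (X j))
    (hval : ∀ j ω, X j ω = 0 ∨ X j ω = 1) (hind : iIndepFun X μ)
    (hdist : ∀ j, μ {ω | X j ω = 1} = ENNReal.ofReal (p j)) (t : ℝ) :
    ‖charFun (μ.map fun ω => ∑ j, ε j * X j ω) t‖
      ≤ exp (-(∑ j, p j * (1 - p j)) * (1 - cos t)) := by
  have hεX : iIndepFun (fun j ω => ε j * X j ω) μ :=
    hind.comp (fun j x => ε j * x) fun j => measurable_const_mul _
  rw [hεX.charFun_map_fun_sum_eq_prod fun j => ((hX j).const_mul _).aemeasurable,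
    Finset.prod_apply, norm_prod, ← Finset.sum_neg_distrib, Finset.sum_mul, exp_sum]
  gcongr with j
  have hcos : cos (ε j * t) = cos t := by rcases hε j with h | h <;> simp [h]
  rw [charFun_map_mul_comp (hX j).aemeasurable,
    charFun_map_eq_of_bernoulli (hX j) (hval j) (hp j) (hdist j), ← hcos]
  exact norm_one_sub_add_mul_exp_mul_I_le _ _

lemma sum_mul_mem_range_intCast {ι : Type*} [Fintype ι] {ε x : ι → ℝ}
    (hε : ∀ j, ε j = 1 ∨ ε j = -1) (hx : ∀ j, x j = 0 ∨ x j = 1) :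
    ∑ j, ε j * x j ∈ Set.range (Int.cast : ℤ → ℝ) := by
  have (j : ι) : ε j * x j ∈ Set.range (Int.cast : ℤ → ℝ) := by
    rcases hε j with h | h <;> rcases hx j with h' | h'
    exacts [⟨0, by simp [h']⟩, ⟨1, by simp [h, h']⟩, ⟨0, by simp [h']⟩, ⟨-1, by simp [h, h']⟩]
  choose m hm using this
  exact ⟨∑ j, m j, by push_cast [hm]; rfl⟩

theorem uniform_bound_signed_bernoulli_sum
    {Ω : Type*} [MeasurableSpace Ω] (μ : Measure Ω) [IsProbabilityMeasure μ]
    (n : ℕ) (p : Fin n → ℝ) (hp : ∀ j, p j ∈ Set.Icc (0 : ℝ) 1)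
    (ε : Fin n → ℝ) (hε : ∀ j, ε j = 1 ∨ ε j = -1)
    (X : Fin n → Ω → ℝ) (hX : ∀ j, Measurable (X j))
    (hval : ∀ j ω, X j ω = 0 ∨ X j ω = 1)
    (hind : iIndepFun X μ)
    (hdist : ∀ j, μ {ω | X j ω = 1} = ENNReal.ofReal (p j))
    (i : ℤ) :
    Real.sqrt (∑ j, p j * (1 - p j)) *
      (μ {ω | ∑ j, ε j * X j ω = (i : ℝ)}).toReal ≤ Mconst := by
  set v := ∑ j, p j * (1 - p j)
  set S : Ω → ℝ := fun ω => ∑ j, ε j * X j ω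
  have hS : Measurable S := by fun_prop
  have hv : 0 ≤ v := Finset.sum_nonneg fun j _ => mul_nonneg (hp j).1 (sub_nonneg.2 (hp j).2)
  have hSint : ∀ᵐ x ∂μ.map S, x ∈ Set.range (Int.cast : ℤ → ℝ) :=
    (ae_map_iff hS.aemeasurable (Set.countable_range _).measurableSet).2
      (ae_of_all _ fun ω => sum_mul_mem_range_intCast hε (hval · ω))
  have hchar : 2 * π * (μ.map S).real {(i : ℝ)} ≤ ∫ t in -π..π, exp (-v * (1 - cos t)) :=
    (two_pi_mul_measureReal_singleton_le hSint i).trans <|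
      intervalIntegral.integral_mono_on (by linarith [pi_pos]) intervalIntegrable_charFun.norm
        (by apply Continuous.intervalIntegrable; fun_prop) fun t _ =>
        norm_charFun_map_sum_le (fun j => (hp j).1) hε hX hval hind hdist t
  calc √v * (μ {ω | S ω = i}).toReal = √v / (2 * π) * (2 * π * (μ.map S).real {(i : ℝ)}) := by
        rw [map_measureReal_apply hS (measurableSet_singleton _)]
        field_simp
        rfl
    _ ≤ √v / (2 * π) * ∫ t in -π..π, exp (-v * (1 - cos t)) := by gcongr
    _ = Mfun (v / 2) := by rw [Mfun_eq_integral, mul_div_cancel₀ v two_ne_zero]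
    _ ≤ Mconst := Mfun_le_Mconst (by positivity)
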